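/- Suppose W is a positive random variable such that for some γ > 1, c > 0 and x' ∈ (0,1), P(W ≤ x) ≥ exp(-c(log(1/x))^γ) for all 0 < x ≤ x', and Y is a positive random variable stochastically dominated by W₀Y₀ + W₁Y₁ (all four variables independent copies of W and Y). Then there exist constants t_γ, c_γ > 0 such that E[e^{-tY}] ≥ exp(-c_γ (log t)^γ) for all t ≥ t_γ. -/

import Mathlib

/-!
Write `φ t = E[exp (-t Y)]`. Since `exp (-t ·)` is decreasing, stochastic domination gives
`φ t ≥ E[exp (-t (W₀ Y₀ + W₁ Y₁))]`, which factors by independence; restricting each factor to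
the event `{Wᵢ ≤ s}` yields `φ t ≥ (P(W ≤ s) φ (t s))²`. For `t = e^u`, `s = e^(-u/2)` the tail
bound turns this into `ψ u ≥ (exp (-c (u/2)^γ) ψ (u/2))²` for `ψ u = φ (e^u)`. As `γ > 1`, the
ansatz `ψ u ≥ exp (-A u^γ)` survives this halving step once `A (2^(γ-1) - 1) ≥ c`, so it
propagates from `[u₀, 2u₀]` to all `u ≥ u₀`.
-/

open MeasureTheory ProbabilityTheory Real Set
open scoped ProbabilityTheory

section Laplace

variable {Ω : Type*} {mΩ : MeasurableSpace Ω} {μ : Measure Ω}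

lemma integrable_exp_neg_mul_of_nonneg [IsFiniteMeasure μ] {Z : Ω → ℝ} (hZ : AEMeasurable Z μ)
    (hZ0 : ∀ᵐ ω ∂μ, 0 ≤ Z ω) {t : ℝ} (ht : 0 ≤ t) : Integrable (fun ω => exp (-t * Z ω)) μ := by
  refine Integrable.of_bound (hZ.const_mul _).exp.aestronglyMeasurable 1 ?_
  filter_upwards [hZ0] with ω hω
  rw [norm_of_nonneg (exp_pos _).le, exp_le_one_iff, neg_mul, neg_nonpos]
  exact mul_nonneg ht hω

lemma antitoneOn_integral_exp_neg_mul [IsFiniteMeasure μ] {Y : Ω → ℝ} (hY : AEMeasurable Y μ)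
    (hY0 : ∀ᵐ ω ∂μ, 0 ≤ Y ω) : AntitoneOn (fun t => ∫ ω, exp (-t * Y ω) ∂μ) (Ici 0) := by
  intro t₁ ht₁ t₂ ht₂ h
  refine integral_mono_ae (integrable_exp_neg_mul_of_nonneg hY hY0 ht₂)
    (integrable_exp_neg_mul_of_nonneg hY hY0 ht₁) ?_
  filter_upwards [hY0] with ω hω
  exact exp_le_exp.mpr (by nlinarith [mem_Ici.mp ht₁])

lemma integral_exp_neg_mul_le_of_forall_measure_le [IsFiniteMeasure μ] {X Z : Ω → ℝ}
    (hX : Measurable X) (hZ : Measurable Z) {t : ℝ} (ht : 0 < t)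
    (hXint : Integrable (fun ω => exp (-t * X ω)) μ)
    (hdom : ∀ y, μ {ω | y ≤ X ω} ≤ μ {ω | y ≤ Z ω}) :
    ∫ ω, exp (-t * Z ω) ∂μ ≤ ∫ ω, exp (-t * X ω) ∂μ := by
  have hsuper : ∀ (V : Ω → ℝ) {u : ℝ}, 0 < u →
      {ω | u < exp (-t * V ω)} = {ω | -log u / t ≤ V ω}ᶜ := by
    intro V u hu
    ext ω
    simp only [mem_ofPred_eq, mem_compl_iff, not_le]
    rw [← log_lt_iff_lt_exp hu, lt_div_iff₀ ht]
    constructor <;> intro h <;> linarith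
  have hlevel : ∀ u ∈ Ioi (0 : ℝ),
      μ {ω | u < exp (-t * Z ω)} ≤ μ {ω | u < exp (-t * X ω)} := by
    intro u hu
    rw [hsuper Z hu, hsuper X hu,
      measure_compl (measurableSet_le measurable_const hZ) (measure_ne_top _ _),
      measure_compl (measurableSet_le measurable_const hX) (measure_ne_top _ _)]
    exact tsub_le_tsub_left (hdom _) _
  have hnn : ∀ V : Ω → ℝ, 0 ≤ᵐ[μ] fun ω => exp (-t * V ω) :=
    fun V => ae_of_all _ fun ω => (exp_pos _).le
  rw [integral_eq_lintegral_of_nonneg_ae (hnn Z) (hZ.const_mul _).exp.aestronglyMeasurable,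
    integral_eq_lintegral_of_nonneg_ae (hnn X) (hX.const_mul _).exp.aestronglyMeasurable]
  refine ENNReal.toReal_mono hXint.lintegral_lt_top.ne ?_
  rw [lintegral_eq_lintegral_meas_lt μ (hnn Z) (hZ.const_mul _).exp.aemeasurable,
    lintegral_eq_lintegral_meas_lt μ (hnn X) (hX.const_mul _).exp.aemeasurable]
  exact setLIntegral_mono' measurableSet_Ioi hlevel

lemma measureReal_mul_integral_exp_neg_mul_le [IsFiniteMeasure μ] {W Y : Ω → ℝ}
    (hW : Measurable W) (hY : Measurable Y) (hWY : IndepFun W Y μ)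
    (hW0 : ∀ᵐ ω ∂μ, 0 ≤ W ω) (hY0 : ∀ᵐ ω ∂μ, 0 ≤ Y ω) {t s : ℝ} (ht : 0 ≤ t) :
    μ.real {ω | W ω ≤ s} * ∫ ω, exp (-(t * s) * Y ω) ∂μ
      ≤ ∫ ω, exp (-t * (W ω * Y ω)) ∂μ := by
  set f : ℝ → ℝ := (Iic s).indicator 1
  have hf : Measurable f := measurable_const.indicator measurableSet_Iic
  have hg : Measurable fun y => exp (-(t * s) * y) := by fun_prop
  have hprod : ∫ ω, f (W ω) * exp (-(t * s) * Y ω) ∂μ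
      = (∫ ω, f (W ω) ∂μ) * ∫ ω, exp (-(t * s) * Y ω) ∂μ :=
    (hWY.comp hf hg).integral_fun_mul_eq_mul_integral (hf.comp hW).aestronglyMeasurable
      (hg.comp hY).aestronglyMeasurable
  have hP : ∫ ω, f (W ω) ∂μ = μ.real {ω | W ω ≤ s} := integral_indicator_one (hW measurableSet_Iic)
  rw [← hP, ← hprod]
  refine integral_mono_of_nonneg (ae_of_all _ fun ω => ?_)
    (integrable_exp_neg_mul_of_nonneg (hW.mul hY).aemeasurable
      (by filter_upwards [hW0, hY0] with ω h₁ h₂ using mul_nonneg h₁ h₂) ht) ?_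
  · exact mul_nonneg (indicator_nonneg (fun _ _ => zero_le_one) _) (exp_pos _).le
  filter_upwards [hY0] with ω hω
  by_cases h : W ω ≤ s
  · simp only [f, indicator_of_mem (mem_Iic.mpr h), Pi.one_apply, one_mul, exp_le_exp]
    nlinarith [mul_le_mul_of_nonneg_left h (mul_nonneg ht hω)]
  · simp only [f, indicator_of_notMem (notMem_Iic.mpr (not_le.mp h)), zero_mul]
    exact (exp_pos _).le

lemma integral_exp_neg_mul_add_eq_mul {W₀ W₁ Y₀ Y₁ : Ω → ℝ}
    (hW₀ : Measurable W₀) (hW₁ : Measurable W₁) (hY₀ : Measurable Y₀) (hY₁ : Measurable Y₁)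
    (hindep : iIndepFun ![W₀, W₁, Y₀, Y₁] μ) (t : ℝ) :
    ∫ ω, exp (-t * (W₀ ω * Y₀ ω + W₁ ω * Y₁ ω)) ∂μ
      = (∫ ω, exp (-t * (W₀ ω * Y₀ ω)) ∂μ) * ∫ ω, exp (-t * (W₁ ω * Y₁ ω)) ∂μ := by
  have hmeas : ∀ i, Measurable (![W₀, W₁, Y₀, Y₁] i) := by
    intro i; fin_cases i <;> assumption
  have hpair : IndepFun (fun ω => (W₀ ω, Y₀ ω)) (fun ω => (W₁ ω, Y₁ ω)) μ :=
    hindep.indepFun_prodMk_prodMk hmeas 0 2 1 3 (by decide) (by decide) (by decide) (by decide)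
  have hg : Measurable fun p : ℝ × ℝ => exp (-t * (p.1 * p.2)) := by fun_prop
  simp_rw [mul_add, exp_add]
  exact (hpair.comp hg hg).integral_fun_mul_eq_mul_integral
    ((hW₀.mul hY₀).const_mul _).exp.aestronglyMeasurable
    ((hW₁.mul hY₁).const_mul _).exp.aestronglyMeasurable

lemma sq_measureReal_mul_integral_exp_le_of_branching [IsProbabilityMeasure μ]
    {W Y W₀ W₁ Y₀ Y₁ : Ω → ℝ} (hY : Measurable Y) (hW₀ : Measurable W₀) (hW₁ : Measurable W₁)
    (hY₀ : Measurable Y₀) (hY₁ : Measurable Y₁)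
    (hW0 : ∀ᵐ ω ∂μ, 0 ≤ W ω) (hY0 : ∀ᵐ ω ∂μ, 0 ≤ Y ω)
    (hindep : iIndepFun ![W₀, W₁, Y₀, Y₁] μ)
    (hW₀d : IdentDistrib W₀ W μ μ) (hW₁d : IdentDistrib W₁ W μ μ)
    (hY₀d : IdentDistrib Y₀ Y μ μ) (hY₁d : IdentDistrib Y₁ Y μ μ)
    (hdom : ∀ y, μ {ω | y ≤ Y ω} ≤ μ {ω | y ≤ W₀ ω * Y₀ ω + W₁ ω * Y₁ ω})
    {t s : ℝ} (ht : 0 < t) :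
    (μ.real {ω | W ω ≤ s} * ∫ ω, exp (-(t * s) * Y ω) ∂μ) ^ 2 ≤ ∫ ω, exp (-t * Y ω) ∂μ := by
  have factor : ∀ {W' Y' : Ω → ℝ}, Measurable W' → Measurable Y' → IdentDistrib W' W μ μ →
      IdentDistrib Y' Y μ μ → IndepFun W' Y' μ →
      μ.real {ω | W ω ≤ s} * ∫ ω, exp (-(t * s) * Y ω) ∂μ
        ≤ ∫ ω, exp (-t * (W' ω * Y' ω)) ∂μ := by
    intro W' Y' hW' hY' hW'd hY'd hW'Y'
    have hP : μ.real {ω | W' ω ≤ s} = μ.real {ω | W ω ≤ s} := by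
      simp only [measureReal_def]
      exact congrArg ENNReal.toReal (hW'd.measure_mem_eq measurableSet_Iic)
    have hL : ∫ ω, exp (-(t * s) * Y' ω) ∂μ = ∫ ω, exp (-(t * s) * Y ω) ∂μ :=
      (hY'd.comp (measurable_const.mul measurable_id).exp).integral_eq
    rw [← hP, ← hL]
    exact measureReal_mul_integral_exp_neg_mul_le hW' hY' hW'Y'
      (hW'd.symm.ae_snd measurableSet_Ici hW0)
      (hY'd.symm.ae_snd measurableSet_Ici hY0) ht.le
  have hfactor₀ := factor hW₀ hY₀ hW₀d hY₀d (hindep.indepFun (i := 0) (j := 2) (by decide))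
  have hfactor₁ := factor hW₁ hY₁ hW₁d hY₁d (hindep.indepFun (i := 1) (j := 3) (by decide))
  have hnn : 0 ≤ μ.real {ω | W ω ≤ s} * ∫ ω, exp (-(t * s) * Y ω) ∂μ :=
    mul_nonneg measureReal_nonneg (integral_nonneg fun ω => (exp_pos _).le)
  calc _ = _ * _ := sq _
    _ ≤ (∫ ω, exp (-t * (W₀ ω * Y₀ ω)) ∂μ) * ∫ ω, exp (-t * (W₁ ω * Y₁ ω)) ∂μ :=
      mul_le_mul hfactor₀ hfactor₁ hnn (hnn.trans hfactor₀)
    _ = ∫ ω, exp (-t * (W₀ ω * Y₀ ω + W₁ ω * Y₁ ω)) ∂μ :=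
      (integral_exp_neg_mul_add_eq_mul hW₀ hW₁ hY₀ hY₁ hindep t).symm
    _ ≤ ∫ ω, exp (-t * Y ω) ∂μ :=
      integral_exp_neg_mul_le_of_forall_measure_le hY ((hW₀.mul hY₀).add (hW₁.mul hY₁)) ht
        (integrable_exp_neg_mul_of_nonneg hY.aemeasurable hY0 ht.le) hdom

end Laplace

lemma exists_exp_neg_rpow_le_of_sq_le {ψ : ℝ → ℝ} {γ c u₀ : ℝ} (hγ : 1 < γ) (hu₀ : 0 < u₀)
    (hψ₀ : 0 < ψ (2 * u₀)) (hanti : AntitoneOn ψ (Ici u₀))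
    (hrec : ∀ u, 2 * u₀ ≤ u → (exp (-c * (u / 2) ^ γ) * ψ (u / 2)) ^ 2 ≤ ψ u) :
    ∃ A > 0, ∀ u, u₀ ≤ u → exp (-A * u ^ γ) ≤ ψ u := by
  have h2γ : 0 < (2 : ℝ) ^ (γ - 1) - 1 := by
    linarith [one_lt_rpow (by norm_num : (1 : ℝ) < 2) (by linarith : 0 < γ - 1)]
  have hu₀γ : 0 < u₀ ^ γ := rpow_pos_of_pos hu₀ γ
  obtain ⟨A, hA, hAbase, hAc⟩ : ∃ A > 0,
      exp (-A * u₀ ^ γ) ≤ ψ (2 * u₀) ∧ c ≤ A * ((2 : ℝ) ^ (γ - 1) - 1) := by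
    set A := max 1 (max (-log (ψ (2 * u₀)) / u₀ ^ γ) (c / ((2 : ℝ) ^ (γ - 1) - 1)))
    refine ⟨A, by positivity, ?_, ?_⟩
    · rw [← exp_log hψ₀, exp_le_exp, neg_mul, neg_le, ← div_le_iff₀ hu₀γ]
      exact (le_max_left _ _).trans (le_max_right _ _)
    · rw [← div_le_iff₀ h2γ]
      exact (le_max_right _ _).trans (le_max_right _ _)
  have hbase : ∀ u ∈ Icc u₀ (2 * u₀), exp (-A * u ^ γ) ≤ ψ u := by
    rintro u ⟨hu₀u, hu2⟩
    calc exp (-A * u ^ γ) ≤ exp (-A * u₀ ^ γ) := by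
          simp only [neg_mul, exp_le_exp, neg_le_neg_iff]; gcongr
      _ ≤ ψ (2 * u₀) := hAbase
      _ ≤ ψ u := hanti hu₀u (mem_Ici.mpr (by linarith)) hu2
  have hstep : ∀ u, 2 * u₀ ≤ u → exp (-A * (u / 2) ^ γ) ≤ ψ (u / 2) →
      exp (-A * u ^ γ) ≤ ψ u := by
    intro u hu hhalf
    have hv : 0 ≤ (u / 2) ^ γ := rpow_nonneg (by linarith) γ
    have hsplit : u ^ γ = 2 * 2 ^ (γ - 1) * (u / 2) ^ γ := by
      rw [rpow_sub_one two_ne_zero, mul_div_cancel₀ _ two_ne_zero, ← mul_rpow zero_le_two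
        (by linarith), mul_div_cancel₀ _ two_ne_zero]
    calc exp (-A * u ^ γ) ≤ (exp (-c * (u / 2) ^ γ) * exp (-A * (u / 2) ^ γ)) ^ 2 := by
          rw [← exp_add, sq, ← exp_add, exp_le_exp, hsplit]
          nlinarith [mul_le_mul_of_nonneg_right hAc hv]
      _ ≤ (exp (-c * (u / 2) ^ γ) * ψ (u / 2)) ^ 2 := by gcongr
      _ ≤ ψ u := hrec u hu
  have hdyadic : ∀ n : ℕ, ∀ u, u₀ ≤ u → u ≤ 2 ^ n * u₀ → exp (-A * u ^ γ) ≤ ψ u := by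
    intro n
    induction n with
    | zero => exact fun u h₁ h₂ => hbase u ⟨h₁, by linarith [pow_zero (2 : ℝ)]⟩
    | succ n ih =>
      intro u h₁ h₂
      by_cases hu : u ≤ 2 * u₀
      · exact hbase u ⟨h₁, hu⟩
      · rw [pow_succ] at h₂
        exact hstep u (by linarith) (ih (u / 2) (by linarith) (by linarith))
  refine ⟨A, hA, fun u hu => ?_⟩
  obtain ⟨n, hn⟩ := pow_unbounded_of_one_lt (u / u₀) one_lt_two
  exact hdyadic n u hu ((div_lt_iff₀ hu₀).mp hn).le

theorem laplace_lower_bound_from_tail_general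
    {Ω : Type*} [MeasureSpace Ω] [IsProbabilityMeasure (ℙ : Measure Ω)]
    (W Y W₀ W₁ Y₀ Y₁ : Ω → ℝ)
    (hYmeas : Measurable Y)
    (hW₀meas : Measurable W₀) (hW₁meas : Measurable W₁)
    (hY₀meas : Measurable Y₀) (hY₁meas : Measurable Y₁)
    (hWpos : ∀ ω, 0 < W ω) (hYpos : ∀ ω, 0 < Y ω)
    (γ c x' : ℝ) (hγ : 1 < γ) (hx'0 : 0 < x') (hx'1 : x' < 1)
    (htail : ∀ x : ℝ, 0 < x → x ≤ x' →
      Real.exp (-c * (Real.log (1 / x)) ^ γ) ≤ (ℙ {ω | W ω ≤ x}).toReal)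
    (hindep : iIndepFun ![W₀, W₁, Y₀, Y₁] ℙ)
    (hW₀d : IdentDistrib W₀ W ℙ ℙ) (hW₁d : IdentDistrib W₁ W ℙ ℙ)
    (hY₀d : IdentDistrib Y₀ Y ℙ ℙ) (hY₁d : IdentDistrib Y₁ Y ℙ ℙ)
    (hdom : ∀ y : ℝ, ℙ {ω | y ≤ Y ω} ≤ ℙ {ω | y ≤ W₀ ω * Y₀ ω + W₁ ω * Y₁ ω}) :
    ∃ tγ > 0, ∃ cγ > 0, ∀ t : ℝ, tγ ≤ t →
      Real.exp (-cγ * (Real.log t) ^ γ) ≤ ∫ ω, Real.exp (-t * Y ω) := by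
  set φ : ℝ → ℝ := fun t => ∫ ω, exp (-t * Y ω)
  set u₀ := log (1 / x')
  have hu₀ : 0 < u₀ := log_pos (one_lt_one_div hx'0 hx'1)
  have hY0 : ∀ᵐ ω ∂(ℙ : Measure Ω), 0 ≤ Y ω := ae_of_all _ fun ω => (hYpos ω).le
  have hrec : ∀ u, 2 * u₀ ≤ u → (exp (-c * (u / 2) ^ γ) * φ (exp (u / 2))) ^ 2 ≤ φ (exp u) := by
    intro u hu
    have hs : exp (-(u / 2)) ≤ x' := by
      rw [← exp_log hx'0, exp_le_exp, ← neg_neg (log x'), ← log_inv, ← one_div]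
      linarith
    have htail_s := htail _ (exp_pos _) hs
    rw [one_div, ← exp_neg, neg_neg, log_exp, ← measureReal_def] at htail_s
    calc _ ≤ ((ℙ : Measure Ω).real {ω | W ω ≤ exp (-(u / 2))}
            * φ (exp u * exp (-(u / 2)))) ^ 2 := by
          rw [← exp_add, show u + -(u / 2) = u / 2 by ring]
          gcongr
      _ ≤ φ (exp u) := sq_measureReal_mul_integral_exp_le_of_branching hYmeas hW₀meas hW₁meas
          hY₀meas hY₁meas (ae_of_all _ fun ω => (hWpos ω).le) hY0 hindep hW₀d hW₁d hY₀d hY₁d hdom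
          (exp_pos u)
  have hanti : AntitoneOn (fun u => φ (exp u)) (Ici u₀) := fun a _ b _ hab =>
    antitoneOn_integral_exp_neg_mul hYmeas.aemeasurable hY0 (mem_Ici.mpr (exp_pos a).le)
      (mem_Ici.mpr (exp_pos b).le) (exp_le_exp.mpr hab)
  obtain ⟨A, hA, hbound⟩ := exists_exp_neg_rpow_le_of_sq_le hγ hu₀
    (integral_exp_pos (integrable_exp_neg_mul_of_nonneg hYmeas.aemeasurable hY0
      (exp_pos _).le)) hanti hrec
  refine ⟨exp u₀, exp_pos _, A, hA, fun t ht => ?_⟩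
  have ht0 : 0 < t := (exp_pos _).trans_le ht
  simpa [φ, exp_log ht0] using hbound (log t) ((le_log_iff_exp_le ht0).mpr ht)

theorem laplace_lower_bound_from_tail
    {Ω : Type*} [MeasureSpace Ω] [IsProbabilityMeasure (ℙ : Measure Ω)]
    (W Y W₀ W₁ Y₀ Y₁ : Ω → ℝ)
    (hWmeas : Measurable W) (hYmeas : Measurable Y)
    (hW₀meas : Measurable W₀) (hW₁meas : Measurable W₁)
    (hY₀meas : Measurable Y₀) (hY₁meas : Measurable Y₁)
    (hWpos : ∀ ω, 0 < W ω) (hYpos : ∀ ω, 0 < Y ω)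
    (γ c x' : ℝ) (hγ : 1 < γ) (hc : 0 < c) (hx'0 : 0 < x') (hx'1 : x' < 1)
    (htail : ∀ x : ℝ, 0 < x → x ≤ x' →
      Real.exp (-c * (Real.log (1 / x)) ^ γ) ≤ (ℙ {ω | W ω ≤ x}).toReal)
    (hindep : iIndepFun ![W₀, W₁, Y₀, Y₁] ℙ)
    (hW₀d : IdentDistrib W₀ W ℙ ℙ) (hW₁d : IdentDistrib W₁ W ℙ ℙ)
    (hY₀d : IdentDistrib Y₀ Y ℙ ℙ) (hY₁d : IdentDistrib Y₁ Y ℙ ℙ)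
    (hdom : ∀ y : ℝ, ℙ {ω | y ≤ Y ω} ≤ ℙ {ω | y ≤ W₀ ω * Y₀ ω + W₁ ω * Y₁ ω}) :
    ∃ tγ > 0, ∃ cγ > 0, ∀ t : ℝ, tγ ≤ t →
      Real.exp (-cγ * (Real.log t) ^ γ) ≤ ∫ ω, Real.exp (-t * Y ω) :=
  laplace_lower_bound_from_tail_general W Y W₀ W₁ Y₀ Y₁ hYmeas hW₀meas hW₁meas hY₀meas hY₁meas hWpos
    hYpos γ c x' hγ hx'0 hx'1 htail hindep hW₀d hW₁d hY₀d hY₁d hdom
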